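/- Let ℰ = (0,1) with Lebesgue measure and consider the strong-kernel operator with kernel κ^strong(a,b) = (min(a,b))^{-ζ}. Then its L²→L² operator norm is finite if and only if ζ < 1/2; furthermore, for ζ < 1/2 its Hilbert–Schmidt norm squared equals 1/((1−2ζ)(1−ζ)). -/

import Mathlib

/-!
Integrating `min(a,b)^(-2ζ)` first over `b` splits at `b = a` and gives
`a^(1-2ζ)/(1-2ζ) + (1-a) a^(-2ζ)`, whose integral over `a` is `1/((1-2ζ)(1-ζ))` when `2ζ < 1`.
Cauchy–Schwarz in `b` bounds the operator norm by the square root of this Hilbert–Schmidt integral.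
Conversely, when `2ζ ≥ 1` the operator maps the indicator of `(1/2,1)` to `a^(-ζ)/2` on `(0,1/2)`,
which is not square integrable.
-/

open MeasureTheory
open scoped ENNReal

/-- Lebesgue measure on the mark space `ℰ = (0,1)`. -/
noncomputable def markMeasure : Measure ℝ := volume.restrict (Set.Ioo (0:ℝ) 1)

/-- The `L²(0,1) → L²(0,1)` operator norm (valued in `[0,∞]`) of the integral operator
`(𝒦f)(a) = ∫₀¹ κ(a,b) f(b) db`: the supremum of `‖𝒦f‖₂/‖f‖₂` over nonzero `f ∈ L²`. -/
noncomputable def kernelOpNorm2 (κ : ℝ → ℝ → ℝ) : ℝ≥0∞ :=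
  ⨆ f : { f : ℝ → ℝ // MemLp f 2 markMeasure ∧ eLpNorm f 2 markMeasure ≠ 0 },
    eLpNorm (fun a => ∫ b, κ a b * f.1 b ∂markMeasure) 2 markMeasure
      / eLpNorm f.1 2 markMeasure

open Set

section HilbertSchmidt
variable {α : Type*} [MeasurableSpace α] {μ : Measure α}

lemma enorm_sq_eq_ofReal_sq (x : ℝ) : ‖x‖ₑ ^ 2 = ENNReal.ofReal (x ^ 2) := by
  rw [Real.enorm_eq_ofReal_abs, ← ENNReal.ofReal_pow (abs_nonneg x), sq_abs]

lemma eLpNorm_two_sq (f : α → ℝ) :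
    eLpNorm f 2 μ ^ 2 = ∫⁻ x, ENNReal.ofReal (f x ^ 2) ∂μ := by
  simpa [← enorm_sq_eq_ofReal_sq] using
    eLpNorm_nnreal_pow_eq_lintegral (μ := μ) (f := f) (p := 2) two_ne_zero

lemma enorm_integral_mul_le {g f : α → ℝ} (hg : AEStronglyMeasurable g μ)
    (hf : AEStronglyMeasurable f μ) :
    ‖∫ x, g x * f x ∂μ‖ₑ ≤ eLpNorm g 2 μ * eLpNorm f 2 μ := by
  refine (enorm_integral_le_lintegral_enorm _).trans ?_
  rw [← eLpNorm_one_eq_lintegral_enorm]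
  simpa using eLpNorm_le_eLpNorm_mul_eLpNorm'_of_norm (p := 2) (q := 2) (r := 1) hg hf (· * ·) 1
    (by simp)

lemma eLpNorm_integral_mul_sq_le {κ : α → α → ℝ} (hκ : ∀ a, AEStronglyMeasurable (κ a) μ)
    {f : α → ℝ} (hf : MemLp f 2 μ) :
    eLpNorm (fun a => ∫ b, κ a b * f b ∂μ) 2 μ ^ 2
      ≤ (∫⁻ a, ∫⁻ b, ENNReal.ofReal (κ a b ^ 2) ∂μ ∂μ) * eLpNorm f 2 μ ^ 2 := by
  rw [eLpNorm_two_sq, ← lintegral_mul_const' _ _ (by finiteness [hf.eLpNorm_ne_top])]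
  refine lintegral_mono fun a => ?_
  rw [← enorm_sq_eq_ofReal_sq, ← eLpNorm_two_sq, ← mul_pow]
  gcongr
  exact enorm_integral_mul_le (hκ a) hf.1

lemma eLpNorm_integral_mul_le {κ : α → α → ℝ} (hκ : ∀ a, AEStronglyMeasurable (κ a) μ)
    {f : α → ℝ} (hf : MemLp f 2 μ) :
    eLpNorm (fun a => ∫ b, κ a b * f b ∂μ) 2 μ
      ≤ (∫⁻ a, ∫⁻ b, ENNReal.ofReal (κ a b ^ 2) ∂μ ∂μ) ^ (1 / 2 : ℝ) * eLpNorm f 2 μ := by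
  have hsqrt_sq (x : ℝ≥0∞) : (x ^ (1 / 2 : ℝ)) ^ 2 = x := by
    rw [← ENNReal.rpow_natCast, ← ENNReal.rpow_mul]; norm_num
  rw [← ENNReal.pow_le_pow_left_iff two_ne_zero, mul_pow, hsqrt_sq]
  exact eLpNorm_integral_mul_sq_le hκ hf

end HilbertSchmidt

lemma lintegral_Ioo_ofReal_eq_intervalIntegral {f : ℝ → ℝ} {a b : ℝ} (hab : a ≤ b)
    (hf : IntervalIntegrable f volume a b) (hf_nonneg : ∀ x ∈ Ioo a b, 0 ≤ f x) :
    ∫⁻ x in Ioo a b, ENNReal.ofReal (f x) = ENNReal.ofReal (∫ x in a..b, f x) := by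
  rw [← ofReal_integral_eq_lintegral_ofReal (hf.1.mono_set Ioo_subset_Ioc_self)
      ((ae_restrict_iff' measurableSet_Ioo).2 (.of_forall hf_nonneg)),
    intervalIntegral.integral_of_le hab, integral_Ioc_eq_integral_Ioo]

lemma lintegral_Ioo_rpow {s c : ℝ} (hs : -1 < s) (hc : 0 < c) :
    ∫⁻ x in Ioo 0 c, ENNReal.ofReal (x ^ s) = ENNReal.ofReal (c ^ (s + 1) / (s + 1)) := by
  rw [lintegral_Ioo_ofReal_eq_intervalIntegral hc.le (intervalIntegral.intervalIntegrable_rpow' hs)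
      fun x hx => Real.rpow_nonneg hx.1.le s,
    integral_rpow (.inl hs), Real.zero_rpow (by linarith), sub_zero]

lemma lintegral_Ioo_min_rpow {s a : ℝ} (hs : -1 < s) (ha : a ∈ Ioo (0 : ℝ) 1) :
    ∫⁻ b in Ioo 0 1, ENNReal.ofReal (min a b ^ s)
      = ENNReal.ofReal (a ^ (s + 1) / (s + 1) + (1 - a) * a ^ s) := by
  have hdisj : Disjoint (Ioo 0 a) (Ico a 1) :=
    disjoint_left.2 fun _ hb₁ hb₂ => (not_le.2 hb₁.2) hb₂.1
  have hbelow : ∫⁻ b in Ioo 0 a, ENNReal.ofReal (min a b ^ s)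
      = ENNReal.ofReal (a ^ (s + 1) / (s + 1)) := by
    rw [setLIntegral_congr_fun measurableSet_Ioo fun b hb => by rw [min_eq_right hb.2.le]]
    exact lintegral_Ioo_rpow hs ha.1
  have habove : ∫⁻ b in Ico a 1, ENNReal.ofReal (min a b ^ s)
      = ENNReal.ofReal ((1 - a) * a ^ s) := by
    rw [setLIntegral_congr_fun measurableSet_Ico fun b hb => by rw [min_eq_left hb.1],
      setLIntegral_const, Real.volume_Ico, ← ENNReal.ofReal_mul (Real.rpow_nonneg ha.1.le s),
      mul_comm]
  have hs₁ : 0 < s + 1 := by linarith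
  rw [← Ioo_union_Ico_eq_Ioo ha.1 ha.2.le, lintegral_union measurableSet_Ico hdisj, hbelow,
    habove, ENNReal.ofReal_add (by have := ha.1; positivity)
      (mul_nonneg (by linarith [ha.2]) (Real.rpow_nonneg ha.1.le s))]

lemma lintegral_Ioo_lintegral_Ioo_min_rpow {s : ℝ} (hs : -1 < s) :
    ∫⁻ a in Ioo 0 1, ∫⁻ b in Ioo 0 1, ENNReal.ofReal (min a b ^ s)
      = ENNReal.ofReal (2 / ((s + 1) * (s + 2))) := by
  have hs₁ : 0 < s + 1 := by linarith
  have hint₀ := intervalIntegral.intervalIntegrable_rpow' (a := 0) (b := 1) hs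
  have hint₁ :=
    intervalIntegral.intervalIntegrable_rpow' (a := 0) (b := 1) (r := s + 1) (by linarith)
  have hsplit : ∀ a ∈ uIcc (0 : ℝ) 1,
      a ^ (s + 1) / (s + 1) + (1 - a) * a ^ s = a ^ s + (1 / (s + 1) - 1) * a ^ (s + 1) := by
    intro a ha
    rw [uIcc_of_le zero_le_one] at ha
    rw [Real.rpow_add_one' ha.1 hs₁.ne']
    ring
  have hint : IntervalIntegrable (fun a => a ^ (s + 1) / (s + 1) + (1 - a) * a ^ s) volume 0 1 :=
    (hint₁.div_const _).add (hint₀.continuousOn_mul (continuousOn_const.sub continuousOn_id))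
  rw [setLIntegral_congr_fun measurableSet_Ioo fun a ha => lintegral_Ioo_min_rpow hs ha,
    lintegral_Ioo_ofReal_eq_intervalIntegral zero_le_one hint fun a ha => by
      have := ha.1; have := ha.2
      exact add_nonneg (by positivity) (mul_nonneg (by linarith) (by positivity)),
    intervalIntegral.integral_congr hsplit,
    intervalIntegral.integral_add hint₀ (hint₁.const_mul _), intervalIntegral.integral_const_mul,
    integral_rpow (.inl hs), integral_rpow (.inl (by linarith)), show s + 1 + 1 = s + 2 by ring]
  have hs₂ : s + 2 ≠ 0 := by linarith
  simp only [Real.one_rpow, Real.zero_rpow hs₁.ne', Real.zero_rpow hs₂]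
  congr 1
  field_simp
  ring

lemma kernelOpNorm2_le {κ : ℝ → ℝ → ℝ} {C : ℝ≥0∞}
    (h : ∀ f, MemLp f 2 markMeasure →
      eLpNorm (fun a => ∫ b, κ a b * f b ∂markMeasure) 2 markMeasure
        ≤ C * eLpNorm f 2 markMeasure) :
    kernelOpNorm2 κ ≤ C :=
  iSup_le fun f => ENNReal.div_le_of_le_mul (h f.1 f.2.1)

lemma kernelOpNorm2_eq_top {κ : ℝ → ℝ → ℝ} {f : ℝ → ℝ} (hf : MemLp f 2 markMeasure)
    (hf₀ : eLpNorm f 2 markMeasure ≠ 0)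
    (hKf : eLpNorm (fun a => ∫ b, κ a b * f b ∂markMeasure) 2 markMeasure = ⊤) :
    kernelOpNorm2 κ = ⊤ :=
  top_le_iff.1 <| le_iSup_of_le
    (⟨f, hf, hf₀⟩ : {g : ℝ → ℝ // MemLp g 2 markMeasure ∧ eLpNorm g 2 markMeasure ≠ 0}) <|
    (ENNReal.div_eq_top.2 (.inr ⟨hKf, hf.eLpNorm_ne_top⟩)).ge

lemma eLpNorm_rpow_Ioo_eq_top {s c : ℝ} (hs : s ≤ -1 / 2) (hc : 0 < c) :
    eLpNorm (fun x : ℝ => x ^ s) 2 (volume.restrict (Ioo 0 c)) = ⊤ := by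
  by_contra h
  have hL2 : MemLp (fun x : ℝ => x ^ s) 2 (volume.restrict (Ioo 0 c)) :=
    ⟨by fun_prop, lt_top_iff_ne_top.2 h⟩
  have hsq : IntegrableOn (fun x : ℝ => x ^ (2 * s)) (Ioo 0 c) := by
    refine IntegrableOn.congr_fun ((memLp_two_iff_integrable_sq hL2.1).1 hL2) (fun x hx => ?_)
      measurableSet_Ioo
    rw [← Real.rpow_natCast, ← Real.rpow_mul hx.1.le, mul_comm]
    norm_num
  linarith [(intervalIntegral.integrableOn_Ioo_rpow_iff hc).1 hsq]

lemma kernelOpNorm2_min_rpow_neg_eq_top {ζ : ℝ} (hζ : 1 / 2 ≤ ζ) :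
    kernelOpNorm2 (fun a b => min a b ^ (-ζ)) = ⊤ := by
  set f₀ : ℝ → ℝ := (Ioo (1 / 2) 1).indicator fun _ => 1
  have hIoo : markMeasure (Ioo (1 / 2) 1) = ENNReal.ofReal (1 / 2) := by
    rw [markMeasure, Measure.restrict_apply measurableSet_Ioo,
      inter_eq_left.2 (Ioo_subset_Ioo (by norm_num) le_rfl), Real.volume_Ioo]
    norm_num
  have hf₀ : MemLp f₀ 2 markMeasure :=
    memLp_indicator_const 2 measurableSet_Ioo 1 (.inr (by rw [hIoo]; exact ENNReal.ofReal_ne_top))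
  have hf₀_ne : eLpNorm f₀ 2 markMeasure ≠ 0 := by
    rw [eLpNorm_indicator_const measurableSet_Ioo two_ne_zero ENNReal.ofNat_ne_top, hIoo]
    simp
  have hKf₀ : ∀ a ∈ Ioo (0 : ℝ) (1 / 2),
      ∫ b, min a b ^ (-ζ) * f₀ b ∂markMeasure = 2⁻¹ * a ^ (-ζ) := by
    intro a ha
    have : (fun b => min a b ^ (-ζ) * f₀ b) = (Ioo (1 / 2) 1).indicator fun _ => a ^ (-ζ) := by
      ext b
      by_cases hb : b ∈ Ioo (1 / 2 : ℝ) 1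
      · simp only [f₀, indicator_of_mem hb, mul_one, min_eq_left (ha.2.trans hb.1).le]
      · simp only [f₀, indicator_of_notMem hb, mul_zero]
    rw [this, integral_indicator_const _ measurableSet_Ioo, measureReal_def, hIoo]
    norm_num
  refine kernelOpNorm2_eq_top hf₀ hf₀_ne (top_le_iff.1 ?_)
  calc ⊤ = eLpNorm ((2⁻¹ : ℝ) • fun a : ℝ => a ^ (-ζ)) 2 (volume.restrict (Ioo 0 (1 / 2))) := by
        rw [eLpNorm_const_smul, eLpNorm_rpow_Ioo_eq_top (by linarith) (by norm_num)]
        simp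
    _ = eLpNorm (fun a => ∫ b, min a b ^ (-ζ) * f₀ b ∂markMeasure) 2
          (volume.restrict (Ioo 0 (1 / 2))) :=
        eLpNorm_congr_ae <| (ae_restrict_iff' measurableSet_Ioo).2 <|
          .of_forall fun a ha => (hKf₀ a ha).symm
    _ ≤ _ := eLpNorm_mono_measure _ <|
        Measure.restrict_mono (Ioo_subset_Ioo le_rfl (by norm_num)) le_rfl

lemma lintegral_lintegral_sq_min_rpow_neg {ζ : ℝ} (hζ : ζ < 1 / 2) :
    ∫⁻ a, ∫⁻ b, ENNReal.ofReal (((min a b) ^ (-ζ)) ^ 2) ∂markMeasure ∂markMeasure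
      = ENNReal.ofReal (1 / ((1 - 2 * ζ) * (1 - ζ))) := by
  have hsq : ∀ a ∈ Ioo (0 : ℝ) 1, ∀ b ∈ Ioo (0 : ℝ) 1,
      ((min a b) ^ (-ζ)) ^ 2 = min a b ^ (-2 * ζ) := by
    intro a ha b hb
    rw [← Real.rpow_natCast, ← Real.rpow_mul (le_min ha.1.le hb.1.le)]
    ring_nf
  simp only [markMeasure]
  rw [setLIntegral_congr_fun measurableSet_Ioo fun a ha =>
      setLIntegral_congr_fun measurableSet_Ioo fun b hb => by rw [hsq a ha b hb],
    lintegral_Ioo_lintegral_Ioo_min_rpow (by linarith),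
    show (-2 * ζ + 1) * (-2 * ζ + 2) = 2 * ((1 - 2 * ζ) * (1 - ζ)) by ring,
    div_mul_cancel_left₀ two_ne_zero, one_div]

theorem strongKernel_opNorm_general (ζ : ℝ) :
    (kernelOpNorm2 (fun a b => (min a b) ^ (-ζ)) < ⊤ ↔ ζ < 1/2) ∧
    (ζ < 1/2 →
      ∫⁻ a, ∫⁻ b, ENNReal.ofReal (((min a b) ^ (-ζ)) ^ 2) ∂markMeasure ∂markMeasure
        = ENNReal.ofReal (1 / ((1 - 2 * ζ) * (1 - ζ)))) := by
  refine ⟨⟨fun hfin => ?_, fun hζ => ?_⟩, lintegral_lintegral_sq_min_rpow_neg⟩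
  · by_contra! hζ
    exact hfin.ne (kernelOpNorm2_min_rpow_neg_eq_top hζ)
  · have hκ (a : ℝ) : AEStronglyMeasurable (fun b : ℝ => min a b ^ (-ζ)) markMeasure :=
      (by fun_prop : Measurable fun b : ℝ => min a b ^ (-ζ)).aestronglyMeasurable
    refine (kernelOpNorm2_le fun f hf => eLpNorm_integral_mul_le hκ hf).trans_lt ?_
    rw [lintegral_lintegral_sq_min_rpow_neg hζ]
    exact ENNReal.rpow_lt_top_of_nonneg (by norm_num) ENNReal.ofReal_ne_top

/-- Strong kernel `κ(a,b) = (min a b)^{-ζ}` on `(0,1)`: the `L²→L²` operator norm is finite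
iff `ζ < 1/2`, and for `ζ < 1/2` the Hilbert–Schmidt norm squared equals
`1/((1−2ζ)(1−ζ))`. -/
theorem strongKernel_opNorm (ζ : ℝ) (hζ : 0 < ζ) :
    (kernelOpNorm2 (fun a b => (min a b) ^ (-ζ)) < ⊤ ↔ ζ < 1/2) ∧
    (ζ < 1/2 →
      ∫⁻ a, ∫⁻ b, ENNReal.ofReal (((min a b) ^ (-ζ)) ^ 2) ∂markMeasure ∂markMeasure
        = ENNReal.ofReal (1 / ((1 - 2 * ζ) * (1 - ζ)))) :=
  strongKernel_opNorm_general ζ
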